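/- arXiv:1101.4889 — 2 statements merged into one kernel-verified Lean document; each statement's English description precedes it below -/
import Mathlib

section
/- If there exists an extremal quantum 1-tester with M outcomes on ℋ₂⊗ℋ₁ whose normalization is I₂⊗ρ with rank(ρ) = r, then for every density operator ρ′ on ℋ₁ with rank(ρ′) = r there exists an extremal quantum 1-tester with M outcomes on ℋ₂⊗ℋ₁ whose normalization is I₂⊗ρ′. -/
open Matrix Kronecker
open scoped ComplexOrder

/-- A quantum 1-tester with `M` outcomes on `ℋ₂ ⊗ ℋ₁`: a family of positive semidefinite
operators summing to `I₂ ⊗ ρ` for some density operator `ρ` on `ℋ₁`. -/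
def IsTester (d₂ d₁ M : ℕ)
    (T : Fin M → Matrix (Fin d₂ × Fin d₁) (Fin d₂ × Fin d₁) ℂ) : Prop :=
  (∀ i, (T i).PosSemidef) ∧
    ∃ ρ : Matrix (Fin d₁) (Fin d₁) ℂ, ρ.PosSemidef ∧ ρ.trace = 1 ∧
      ∑ i, T i = (1 : Matrix (Fin d₂) (Fin d₂) ℂ) ⊗ₖ ρ

/-!
Testers form the base `tr σ = 1` of the cone of families of positive operators summing to some
`I ⊗ σ`, so a tester `T` is extremal iff it spans an extreme ray of that cone: in every
decomposition `T = A + B` inside the cone, `A` is a multiple of `T`.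

If `ρ` and `ρ'` have the same rank, their spectral decompositions give `S` with `ρ' = S ρ S†` and
a left inverse `S'` of `S` on the range of `ρ`. Conjugation by `I ⊗ S` turns `T` into a tester
normalized by `I ⊗ ρ'`, and conjugation by `I ⊗ S'` pulls any decomposition of the image back to
one of `T`. Every summand lies below `I ⊗ ρ'`, hence is supported on the range of `I ⊗ ρ'`, where
`S S'` acts as the identity; so the pulled-back proportionality pushes forward again.
-/

open scoped MatrixOrder

section ExtremeRay

variable {E : Type*} [AddCommGroup E] [Module ℝ E]

def IsExtremeRay (C : PointedCone ℝ E) (x : E) : Prop :=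
  ∀ a ∈ C, ∀ b ∈ C, a + b = x → ∃ s : ℝ, a = s • x

variable {C : PointedCone ℝ E} {φ : E →ₗ[ℝ] ℝ} {x : E}

theorem isExtremeRay_of_mem_extremePoints (hφ : ∀ y ∈ C, 0 ≤ φ y)
    (hφ_eq_zero : ∀ y ∈ C, φ y = 0 → y = 0)
    (hx : x ∈ ((C : Set E) ∩ {y | φ y = 1}).extremePoints ℝ) : IsExtremeRay C x := by
  obtain ⟨⟨-, hx₁⟩, hext⟩ := hx
  intro a ha b hb hab
  rcases (hφ a ha).eq_or_lt with ha₀ | ha₀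
  · exact ⟨0, by rw [hφ_eq_zero a ha ha₀.symm, zero_smul]⟩
  rcases (hφ b hb).eq_or_lt with hb₀ | hb₀
  · exact ⟨1, by rw [one_smul, ← hab, hφ_eq_zero b hb hb₀.symm, add_zero]⟩
  have hnormalize : ∀ y ∈ C, 0 < φ y → (φ y)⁻¹ • y ∈ (C : Set E) ∩ {z | φ z = 1} :=
    fun y hy hy₀ => ⟨C.smul_mem (inv_nonneg.2 hy₀.le) hy, by simp [hy₀.ne']⟩
  have hseg : x ∈ openSegment ℝ ((φ a)⁻¹ • a) ((φ b)⁻¹ • b) :=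
    ⟨φ a, φ b, ha₀, hb₀, by rw [← map_add, hab, hx₁],
      by simp only [smul_smul, mul_inv_cancel₀ ha₀.ne', mul_inv_cancel₀ hb₀.ne', one_smul, hab]⟩
  refine ⟨φ a, ?_⟩
  rw [← hext (hnormalize a ha ha₀) (hnormalize b hb hb₀) hseg, smul_smul,
    mul_inv_cancel₀ ha₀.ne', one_smul]

theorem IsExtremeRay.mem_extremePoints (hx : IsExtremeRay C x) (hxC : x ∈ C) (hx₁ : φ x = 1) :
    x ∈ ((C : Set E) ∩ {y | φ y = 1}).extremePoints ℝ := by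
  refine ⟨⟨hxC, hx₁⟩, ?_⟩
  rintro a ⟨haC, ha₁ : φ a = 1⟩ b ⟨hbC, -⟩ ⟨s, t, hs, ht, -, hsum⟩
  obtain ⟨c, hc⟩ := hx (s • a) (C.smul_mem hs.le haC) (t • b) (C.smul_mem ht.le hbC) hsum
  have hsc : s = c := by simpa [ha₁, hx₁] using congrArg φ hc
  exact smul_right_injective E hs.ne' (show s • a = s • x by rw [hc, hsc])

end ExtremeRay

namespace Matrix

variable {𝕜 n p : Type*} [RCLike 𝕜] [Fintype n] {A B : Matrix n n 𝕜}

theorem PosSemidef.mulVec_eq_zero_of_le (hA : A.PosSemidef) (hAB : A ≤ B) {v : n → 𝕜}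
    (hv : B *ᵥ v = 0) : A *ᵥ v = 0 := by
  refine (hA.dotProduct_mulVec_zero_iff v).1 (le_antisymm ?_ (hA.dotProduct_mulVec_nonneg v))
  simpa [sub_mulVec, hv] using hAB.dotProduct_mulVec_nonneg v

theorem PosSemidef.mul_eq_zero_of_le (hA : A.PosSemidef) (hAB : A ≤ B) {R : Matrix n p 𝕜}
    (hR : B * R = 0) : A * R = 0 := by
  ext i j
  have hcol := hA.mulVec_eq_zero_of_le hAB (v := fun k => R k j)
    (funext fun i => by simpa [mul_apply, mulVec, dotProduct] using congrFun₂ hR i j)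
  simpa [mul_apply, mulVec, dotProduct] using congrFun hcol i

theorem PosSemidef.ofReal_re_trace {σ : Matrix n n ℂ} (hσ : σ.PosSemidef) :
    ((σ.trace.re : ℝ) : ℂ) = σ.trace :=
  (Complex.eq_re_of_ofReal_le (r := 0) (by simpa using hσ.trace_nonneg)).symm

variable [DecidableEq n]

theorem PosSemidef.mul_eq_self_of_le (hA : A.PosSemidef) (hAB : A ≤ B) {P : Matrix n n 𝕜}
    (hP : P * B = B) : P * A = A := by
  have hB : B.IsHermitian := (nonneg_iff_posSemidef.1 (hA.nonneg.trans hAB)).isHermitian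
  have hBR : B * (1 - P)ᴴ = 0 := by
    rw [← hB.eq, ← conjTranspose_mul, sub_mul, one_mul, hP, sub_self, conjTranspose_zero]
  have hAR := hA.mul_eq_zero_of_le hAB hBR
  rw [← hA.isHermitian.eq, ← conjTranspose_mul, conjTranspose_eq_zero, sub_mul, one_mul,
    sub_eq_zero] at hAR
  exact hAR.symm

theorem PosSemidef.conj_eq_self_of_le (hA : A.PosSemidef) (hAB : A ≤ B) {P : Matrix n n 𝕜}
    (hP : P * B = B) : P * A * Pᴴ = A := by
  have hPA := hA.mul_eq_self_of_le hAB hP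
  rw [hPA]
  conv_lhs => rw [← hA.isHermitian.eq, ← conjTranspose_mul, hPA, hA.isHermitian.eq]

end Matrix

section TesterCone

variable (ι m n : Type*) [Fintype ι] [Fintype m] [DecidableEq m] [Fintype n]

def testerCone : PointedCone ℝ (ι → Matrix (m × n) (m × n) ℂ) where
  carrier := {W | (∀ i, (W i).PosSemidef) ∧
    ∃ σ : Matrix n n ℂ, σ.PosSemidef ∧ ∑ i, W i = (1 : Matrix m m ℂ) ⊗ₖ σ}
  add_mem' := by
    rintro W V ⟨hW, σ, hσ, hWσ⟩ ⟨hV, τ, hτ, hVτ⟩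
    exact ⟨fun i => (hW i).add (hV i), σ + τ, hσ.add hτ, by
      simp [Finset.sum_add_distrib, hWσ, hVτ, kronecker_add]⟩
  zero_mem' := ⟨fun _ => .zero, 0, .zero, by simp⟩
  smul_mem' := by
    rintro c W ⟨hW, σ, hσ, hWσ⟩
    exact ⟨fun i => (hW i).smul c.2, c • σ, hσ.smul c.2, by
      simp [← Finset.smul_sum, hWσ, kronecker_smul]⟩

noncomputable def testerTrace : (ι → Matrix (m × n) (m × n) ℂ) →ₗ[ℝ] ℝ where
  toFun W := (Fintype.card m : ℝ)⁻¹ * (∑ i, W i).trace.re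
  map_add' W V := by simp [Finset.sum_add_distrib, mul_add]
  map_smul' c W := by simp [← Finset.smul_sum]; ring

variable {ι m n}

theorem testerTrace_eq {W : ι → Matrix (m × n) (m × n) ℂ} {σ : Matrix n n ℂ} [Nonempty m]
    (hW : ∑ i, W i = (1 : Matrix m m ℂ) ⊗ₖ σ) : testerTrace ι m n W = σ.trace.re := by
  change (Fintype.card m : ℝ)⁻¹ * (∑ i, W i).trace.re = _
  rw [hW, trace_kronecker, trace_one]
  simp [Fintype.card_ne_zero]

variable [Nonempty m] {W : ι → Matrix (m × n) (m × n) ℂ}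

theorem testerTrace_nonneg (hW : W ∈ testerCone ι m n) : 0 ≤ testerTrace ι m n W := by
  obtain ⟨-, σ, hσ, hWσ⟩ := hW
  rw [testerTrace_eq hWσ]
  exact (Complex.nonneg_iff.1 hσ.trace_nonneg).1

theorem eq_zero_of_testerTrace_eq_zero (hW : W ∈ testerCone ι m n)
    (h : testerTrace ι m n W = 0) : W = 0 := by
  obtain ⟨hW, σ, hσ, hWσ⟩ := hW
  rw [testerTrace_eq hWσ] at h
  have hσ₀ : σ = 0 := by
    rw [← hσ.trace_eq_zero_iff, ← hσ.ofReal_re_trace, h, Complex.ofReal_zero]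
  rw [hσ₀, kronecker_zero] at hWσ
  funext i
  have hle := Finset.single_le_sum (f := W) (fun j _ => (hW j).nonneg) (Finset.mem_univ i)
  rw [hWσ] at hle
  exact le_antisymm hle (hW i).nonneg

end TesterCone

theorem setOf_isTester_eq {d₂ d₁ M : ℕ} [NeZero d₂] :
    {W | IsTester d₂ d₁ M W} =
      (testerCone (Fin M) (Fin d₂) (Fin d₁) : Set _) ∩ {W | testerTrace _ _ _ W = 1} := by
  ext W
  constructor
  · rintro ⟨hW, ρ, hρ, hρ₁, hWρ⟩
    exact ⟨⟨hW, ρ, hρ, hWρ⟩, by simp [testerTrace_eq hWρ, hρ₁]⟩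
  · rintro ⟨⟨hW, σ, hσ, hWσ⟩, hW₁ : testerTrace _ _ _ W = 1⟩
    rw [testerTrace_eq hWσ] at hW₁
    refine ⟨hW, σ, hσ, ?_, hWσ⟩
    rw [← hσ.ofReal_re_trace, hW₁, Complex.ofReal_one]

section KronConj

variable {ι m n : Type*} [Fintype m] [DecidableEq m] [Fintype n] [DecidableEq n]

def kronConj (S : Matrix n n ℂ) :
    (ι → Matrix (m × n) (m × n) ℂ) →ₗ[ℝ] (ι → Matrix (m × n) (m × n) ℂ) where
  toFun W i := ((1 : Matrix m m ℂ) ⊗ₖ S) * W i * ((1 : Matrix m m ℂ) ⊗ₖ S)ᴴ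
  map_add' W V := by funext i; simp [Matrix.mul_add, Matrix.add_mul]
  map_smul' c W := by funext i; simp

theorem kronConj_apply (S : Matrix n n ℂ) (W : ι → Matrix (m × n) (m × n) ℂ) (i : ι) :
    kronConj S W i = ((1 : Matrix m m ℂ) ⊗ₖ S) * W i * ((1 : Matrix m m ℂ) ⊗ₖ S)ᴴ :=
  rfl

theorem kronConj_kronConj (S S' : Matrix n n ℂ) (W : ι → Matrix (m × n) (m × n) ℂ) :
    kronConj S (kronConj S' W) = kronConj (S * S') W := by
  funext i
  rw [kronConj_apply, kronConj_apply, kronConj_apply, ← Matrix.one_mul (1 : Matrix m m ℂ),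
    mul_kronecker_mul, Matrix.one_mul]
  simp only [conjTranspose_mul, Matrix.mul_assoc]

variable [Fintype ι]

theorem sum_kronConj (S : Matrix n n ℂ) {W : ι → Matrix (m × n) (m × n) ℂ} {σ : Matrix n n ℂ}
    (hW : ∑ i, W i = (1 : Matrix m m ℂ) ⊗ₖ σ) :
    ∑ i, kronConj S W i = (1 : Matrix m m ℂ) ⊗ₖ (S * σ * Sᴴ) := by
  simp only [kronConj_apply, ← Finset.sum_mul, ← Finset.mul_sum, hW, conjTranspose_kronecker,
    conjTranspose_one, ← mul_kronecker_mul, Matrix.one_mul]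

theorem kronConj_mem (S : Matrix n n ℂ) {W : ι → Matrix (m × n) (m × n) ℂ}
    (hW : W ∈ testerCone ι m n) : kronConj S W ∈ testerCone ι m n := by
  obtain ⟨hW, σ, hσ, hWσ⟩ := hW
  exact ⟨fun i => (hW i).mul_mul_conjTranspose_same _, S * σ * Sᴴ,
    hσ.mul_mul_conjTranspose_same S, sum_kronConj S hWσ⟩

theorem kronConj_eq_self {W : ι → Matrix (m × n) (m × n) ℂ} {ρ P : Matrix n n ℂ}
    (hW : ∀ i, (W i).PosSemidef) (hle : ∑ i, W i ≤ (1 : Matrix m m ℂ) ⊗ₖ ρ) (hP : P * ρ = ρ) :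
    kronConj P W = W := by
  funext i
  refine (hW i).conj_eq_self_of_le ((Finset.single_le_sum (fun j _ => (hW j).nonneg)
    (Finset.mem_univ i)).trans hle) ?_
  rw [← mul_kronecker_mul, Matrix.one_mul, hP]

theorem IsExtremeRay.map_kronConj {T : ι → Matrix (m × n) (m × n) ℂ} {ρ S S' : Matrix n n ℂ}
    (hT : IsExtremeRay (testerCone ι m n) T) (hT₀ : ∀ i, (T i).PosSemidef)
    (hTρ : ∑ i, T i = (1 : Matrix m m ℂ) ⊗ₖ ρ) (hS : S' * S * ρ = ρ) :
    IsExtremeRay (testerCone ι m n) (kronConj S T) := by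
  intro a ha b hb hab
  have hT' : kronConj S' (kronConj S T) = T := by
    rw [kronConj_kronConj]
    exact kronConj_eq_self hT₀ hTρ.le hS
  obtain ⟨s, hs⟩ := hT _ (kronConj_mem S' ha) _ (kronConj_mem S' hb) (by rw [← map_add, hab, hT'])
  have hle : ∑ i, a i ≤ (1 : Matrix m m ℂ) ⊗ₖ (S * ρ * Sᴴ) := by
    rw [← sum_kronConj S hTρ, ← hab]
    simp only [Pi.add_apply, Finset.sum_add_distrib]
    exact le_add_of_nonneg_right (Finset.sum_nonneg fun i _ => (hb.1 i).nonneg)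
  have hSS' : S * S' * (S * ρ * Sᴴ) = S * ρ * Sᴴ := by
    rw [show S * S' * (S * ρ * Sᴴ) = S * (S' * S * ρ) * Sᴴ by simp only [Matrix.mul_assoc], hS]
  refine ⟨s, ?_⟩
  calc a = kronConj (S * S') a := (kronConj_eq_self ha.1 hle hSS').symm
    _ = kronConj S (kronConj S' a) := (kronConj_kronConj S S' a).symm
    _ = s • kronConj S T := by rw [hs, map_smul]

end KronConj

section CongruentOnRange

variable {R n : Type*} [Semiring R] [StarRing R] [Fintype n]

/-- `S' * S * ρ = ρ` says that `S'` inverts `S` on the range of `ρ`. -/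
def CongruentOnRange (ρ ρ' : Matrix n n R) : Prop :=
  ∃ S S' : Matrix n n R, S' * S * ρ = ρ ∧ S * ρ * Sᴴ = ρ'

theorem CongruentOnRange.trans {ρ₁ ρ₂ ρ₃ : Matrix n n R} (hρ₁ : ρ₁.IsHermitian)
    (h₁₂ : CongruentOnRange ρ₁ ρ₂) (h₂₃ : CongruentOnRange ρ₂ ρ₃) : CongruentOnRange ρ₁ ρ₃ := by
  obtain ⟨S₁, S₁', hS₁, rfl⟩ := h₁₂
  obtain ⟨S₂, S₂', hS₂, rfl⟩ := h₂₃
  refine ⟨S₂ * S₁, S₁' * S₂', ?_, by simp only [conjTranspose_mul, Matrix.mul_assoc]⟩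
  have hρ₁S₁ : ρ₁ * S₁ᴴ * S₁'ᴴ = ρ₁ := by
    conv_rhs => rw [← hρ₁.eq, ← hS₁]
    simp only [conjTranspose_mul, hρ₁.eq, Matrix.mul_assoc]
  calc S₁' * S₂' * (S₂ * S₁) * ρ₁
      = S₁' * (S₂' * S₂ * (S₁ * ρ₁ * S₁ᴴ)) * S₁'ᴴ := by
        conv_lhs => rw [← hρ₁S₁]
        simp only [Matrix.mul_assoc]
    _ = S₁' * S₁ * (ρ₁ * S₁ᴴ * S₁'ᴴ) := by rw [hS₂]; simp only [Matrix.mul_assoc]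
    _ = ρ₁ := by rw [hρ₁S₁, hS₁]

variable [DecidableEq n]

theorem congruentOnRange_conj {S S' : Matrix n n R} (h : S' * S = 1) (ρ : Matrix n n R) :
    CongruentOnRange ρ (S * ρ * Sᴴ) :=
  ⟨S, S', by rw [h, Matrix.one_mul], rfl⟩

theorem congruentOnRange_diagonal_comp (d : n → R) (σ : Equiv.Perm n) :
    CongruentOnRange (diagonal d) (diagonal (d ∘ σ)) := by
  have h := congruentOnRange_conj (S := σ.permMatrix R) (S' := σ⁻¹.permMatrix R)
    (by rw [← permMatrix_mul, mul_inv_cancel, permMatrix_one]) (diagonal d)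
  rwa [conjTranspose_permMatrix, PEquiv.toMatrix_toPEquiv_mul, PEquiv.mul_toMatrix_toPEquiv,
    submatrix_submatrix, Equiv.Perm.inv_def, Equiv.symm_symm, Function.comp_id, Function.id_comp,
    submatrix_diagonal_equiv] at h

end CongruentOnRange

theorem Equiv.Perm.exists_forall_iff_of_card_eq {α : Type*} [Fintype α] {p q : α → Prop}
    [DecidablePred p] [DecidablePred q]
    (h : Fintype.card {x // p x} = Fintype.card {x // q x}) :
    ∃ σ : Equiv.Perm α, ∀ x, q (σ x) ↔ p x := by
  set e := Fintype.equivOfCardEq h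
  exact ⟨e.extendSubtype, fun x => ⟨fun hq => by_contra fun hp => e.extendSubtype_not_mem x hp hq,
    e.extendSubtype_mem x⟩⟩

section RankCongruence

variable {n : Type*} [Fintype n] [DecidableEq n]

theorem congruentOnRange_diagonal_ofReal {g g' : n → ℝ} (hg : ∀ i, 0 ≤ g i) (hg' : ∀ i, 0 ≤ g' i)
    (h : ∀ i, g i = 0 ↔ g' i = 0) :
    CongruentOnRange (diagonal fun i => (g i : ℂ)) (diagonal fun i => (g' i : ℂ)) := by
  set c : n → ℝ := fun i => √(g' i / g i)
  refine ⟨diagonal fun i => (c i : ℂ), diagonal fun i => ((c i)⁻¹ : ℂ), ?_, ?_⟩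
  · simp only [diagonal_mul_diagonal]
    congr 1
    funext i
    rcases eq_or_ne (g i) 0 with hgi | hgi
    · simp [hgi]
    have hc : c i ≠ 0 := Real.sqrt_ne_zero'.2 <|
      div_pos ((hg' i).lt_of_ne (Ne.symm (mt (h i).2 hgi))) ((hg i).lt_of_ne (Ne.symm hgi))
    rw [inv_mul_cancel₀ (by exact_mod_cast hc), one_mul]
  · simp only [diagonal_conjTranspose, diagonal_mul_diagonal]
    congr 1
    funext i
    rcases eq_or_ne (g i) 0 with hgi | hgi
    · simp [hgi, (h i).1 hgi]
    have hcc : c i * g i * c i = g' i := by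
      rw [mul_right_comm, Real.mul_self_sqrt (div_nonneg (hg' i) (hg i)), div_mul_cancel₀ _ hgi]
    simpa [Complex.conj_ofReal] using congrArg (fun x : ℝ => (x : ℂ)) hcc

omit [Fintype n] in
theorem isHermitian_diagonal_ofReal (g : n → ℝ) : (diagonal fun i => (g i : ℂ)).IsHermitian :=
  isHermitian_diagonal_of_self_adjoint _ (funext fun _ => Complex.conj_ofReal _)

theorem congruentOnRange_diagonal_ofReal_of_card_eq {g g' : n → ℝ} (hg : ∀ i, 0 ≤ g i)
    (hg' : ∀ i, 0 ≤ g' i) (h : Fintype.card {i // g i ≠ 0} = Fintype.card {i // g' i ≠ 0}) :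
    CongruentOnRange (diagonal fun i => (g i : ℂ)) (diagonal fun i => (g' i : ℂ)) := by
  obtain ⟨σ, hσ⟩ := Equiv.Perm.exists_forall_iff_of_card_eq h.symm
  exact .trans (isHermitian_diagonal_ofReal g)
    (congruentOnRange_diagonal_comp _ σ)
    (congruentOnRange_diagonal_ofReal (fun i => hg (σ i)) hg' fun i => not_iff_not.1 (hσ i))

theorem Matrix.IsHermitian.congruentOnRange_diagonal_eigenvalues {A : Matrix n n ℂ}
    (hA : A.IsHermitian) : CongruentOnRange A (diagonal fun i => (hA.eigenvalues i : ℂ)) := by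
  have h := congruentOnRange_conj (Unitary.coe_mul_star_self hA.eigenvectorUnitary) A
  convert h using 1
  rw [← star_eq_conjTranspose]
  exact hA.conjStarAlgAut_star_eigenvectorUnitary.symm

theorem Matrix.IsHermitian.diagonal_eigenvalues_congruentOnRange {A : Matrix n n ℂ}
    (hA : A.IsHermitian) : CongruentOnRange (diagonal fun i => (hA.eigenvalues i : ℂ)) A := by
  have h := congruentOnRange_conj (Unitary.coe_star_mul_self hA.eigenvectorUnitary)
    (diagonal fun i => (hA.eigenvalues i : ℂ))
  convert h using 1
  rw [← star_eq_conjTranspose]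
  exact hA.spectral_theorem

theorem Matrix.PosSemidef.congruentOnRange_of_rank_eq {ρ ρ' : Matrix n n ℂ} (hρ : ρ.PosSemidef)
    (hρ' : ρ'.PosSemidef) (h : ρ.rank = ρ'.rank) : CongruentOnRange ρ ρ' := by
  have hcard := hρ.1.rank_eq_card_non_zero_eigs.symm.trans
    (h.trans hρ'.1.rank_eq_card_non_zero_eigs)
  exact hρ.1.congruentOnRange_diagonal_eigenvalues.trans hρ.1 <|
    (congruentOnRange_diagonal_ofReal_of_card_eq hρ.eigenvalues_nonneg hρ'.eigenvalues_nonneg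
      hcard).trans (isHermitian_diagonal_ofReal _) hρ'.1.diagonal_eigenvalues_congruentOnRange

end RankCongruence

theorem stmt_7 {d₁ d₂ M r : ℕ}
    (h : ∃ (T : Fin M → Matrix (Fin d₂ × Fin d₁) (Fin d₂ × Fin d₁) ℂ)
          (ρ : Matrix (Fin d₁) (Fin d₁) ℂ),
        (∀ i, (T i).PosSemidef) ∧ ρ.PosSemidef ∧ ρ.trace = 1 ∧ ρ.rank = r ∧
        ∑ i, T i = (1 : Matrix (Fin d₂) (Fin d₂) ℂ) ⊗ₖ ρ ∧
        T ∈ {W | IsTester d₂ d₁ M W}.extremePoints ℝ) :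
    ∀ ρ' : Matrix (Fin d₁) (Fin d₁) ℂ, ρ'.PosSemidef → ρ'.trace = 1 → ρ'.rank = r →
      ∃ T' : Fin M → Matrix (Fin d₂ × Fin d₁) (Fin d₂ × Fin d₁) ℂ,
        (∀ i, (T' i).PosSemidef) ∧
        ∑ i, T' i = (1 : Matrix (Fin d₂) (Fin d₂) ℂ) ⊗ₖ ρ' ∧
        T' ∈ {W | IsTester d₂ d₁ M W}.extremePoints ℝ := by
  obtain ⟨T, ρ, hT, hρ, -, hρr, hTρ, hText⟩ := h
  intro ρ' hρ' hρ'₁ hρ'r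
  obtain rfl | hd₂ := Nat.eq_zero_or_pos d₂
  · exact ⟨T, hT, Subsingleton.elim _ _, hText⟩
  have : NeZero d₂ := ⟨hd₂.ne'⟩
  obtain ⟨S, S', hS, rfl⟩ := hρ.congruentOnRange_of_rank_eq hρ' (hρr.trans hρ'r.symm)
  rw [setOf_isTester_eq] at hText ⊢
  have hray := isExtremeRay_of_mem_extremePoints (fun _ => testerTrace_nonneg)
    (fun _ => eq_zero_of_testerTrace_eq_zero) hText
  refine ⟨kronConj S T, fun i => (hT i).mul_mul_conjTranspose_same _, sum_kronConj S hTρ, ?_⟩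
  exact (hray.map_kronConj hT hTρ hS).mem_extremePoints (kronConj_mem S hText.1.1)
    (by simp [testerTrace_eq (sum_kronConj S hTρ), hρ'₁])
end

section
/- Let ℋ₂ = ℋ₁ = ℂ², and let P₁, P₂ be rank-two orthogonal projections on ℂ²⊗ℂ² with P₁ + P₂ = I⊗I. The two-outcome quantum 1-tester {T₁ = ½P₁, T₂ = ½P₂} is NOT extremal if and only if either P₁ = I₂⊗|v⟩⟨v| for some unit vector |v⟩ ∈ ℋ₁, or there exist unit vectors |e⟩ ∈ ℋ₁ and |f⟩ ∈ ℋ₂ such that |f⟩⊗|e⟩ lies in the range of P₁ and |f^⊥⟩⊗|e⟩ lies in the range of P₂, where |f^⊥⟩ is a unit vector orthogonal to |f⟩ in ℋ₂. -/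
/-!
If `T = ½(P, 1 - P)` is a proper convex combination of testers `T'` and `T''` with `T' ≠ T`,
positivity forces `T'₀` to live under `P` and `T'₁` under `1 - P`, so `P` commutes with
`T'₀ + T'₁ = 1 ⊗ ρ`, where `ρ` is not scalar. Then `P` commutes with `1 ⊗ |e⟩⟨e|` for an
eigenvector `e` of `ρ`, hence `P = M ⊗ |e⟩⟨e| + M' ⊗ |e'⟩⟨e'|` for projections `M`, `M'` on `ℋ₂`
(the compressions of `P` by the isometries `f ↦ f ⊗ e`, `f ↦ f ⊗ e'`). If `M` (or `M'`) is neither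
`0` nor `1`, unit vectors `f ∈ range M` and `f' ∈ ker M` give `f ⊗ e ∈ range P` and
`f' ⊗ e ∈ range (1 - P)`; otherwise the rank conditions leave `P = 1 ⊗ |e⟩⟨e|` or
`P = 1 ⊗ |e'⟩⟨e'|`.

Conversely, in either case `T ± D` are testers for an explicit `D ≠ 0`: `D = ¼(P, -(1 - P))` when
`P = 1 ⊗ |v⟩⟨v|`, and `D = (½|x⟩⟨x| - ¼P, ½|x'⟩⟨x'| - ¼(1 - P))` for `x = f ⊗ e`, `x' = f' ⊗ e`,
where `|x⟩⟨x| + |x'⟩⟨x'| = 1 ⊗ |e⟩⟨e|` makes `D₀ + D₁` of the form `1 ⊗ σ`.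
-/

open Matrix Kronecker
open scoped ComplexOrder

theorem not_mem_extremePoints_of_add_mem_of_sub_mem {E : Type*} [AddCommGroup E] [Module ℝ E]
    {A : Set E} {x d : E} (hd : d ≠ 0) (hadd : x + d ∈ A) (hsub : x - d ∈ A) :
    x ∉ A.extremePoints ℝ := by
  intro hx
  have hseg : x ∈ openSegment ℝ (x + d) (x - d) :=
    ⟨1/2, 1/2, by norm_num, by norm_num, by norm_num, by module⟩
  exact hd (by simpa using (mem_extremePoints_iff_left.mp hx).2 _ hadd _ hsub hseg)

namespace Matrix

theorem kronecker_sub {α l m n p : Type*} [NonUnitalNonAssocRing α] (A : Matrix l m α)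
    (B₁ B₂ : Matrix n p α) : A ⊗ₖ (B₁ - B₂) = A ⊗ₖ B₁ - A ⊗ₖ B₂ := by
  ext
  simp [mul_sub]

section

variable {n : Type*} [Fintype n]

open scoped MatrixOrder in
theorem _root_.IsStarProjection.posSemidef {A : Matrix n n ℂ} (hA : IsStarProjection A) :
    A.PosSemidef :=
  nonneg_iff_posSemidef.mp hA.nonneg

theorem isStarProjection_vecMulVec {v : n → ℂ} (hv : star v ⬝ᵥ v = 1) :
    IsStarProjection (vecMulVec v (star v)) where
  isIdempotentElem := by
    rw [IsIdempotentElem, vecMulVec_mul_vecMulVec, hv, one_smul]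
  isSelfAdjoint := by
    ext i j
    simp [vecMulVec_apply, mul_comm]

theorem mulVec_eq_self_of_mem_range {P : Matrix n n ℂ} (hP : IsIdempotentElem P) {x : n → ℂ}
    (hx : x ∈ LinearMap.range P.mulVecLin) : P *ᵥ x = x := by
  obtain ⟨y, rfl⟩ := hx
  rw [mulVecLin_apply, mulVec_mulVec, hP.eq]

theorem posSemidef_sub_vecMulVec {P : Matrix n n ℂ} (hP : IsStarProjection P) {x : n → ℂ}
    (hx : star x ⬝ᵥ x = 1) (hPx : P *ᵥ x = x) : (P - vecMulVec x (star x)).PosSemidef :=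
  ((isStarProjection_vecMulVec hx).sub_of_mul_eq_right hP
    (by rw [mul_vecMulVec, hPx])).posSemidef

theorem posSemidef_half_smul_add_and_sub {P : Matrix n n ℂ} (hP : IsStarProjection P)
    {x : n → ℂ} (hx : star x ⬝ᵥ x = 1) (hPx : P *ᵥ x = x) :
    ((1/2 : ℂ) • P + ((1/2 : ℂ) • vecMulVec x (star x) - (1/4 : ℂ) • P)).PosSemidef ∧
      ((1/2 : ℂ) • P - ((1/2 : ℂ) • vecMulVec x (star x) - (1/4 : ℂ) • P)).PosSemidef := by
  constructor
  · rw [show (1/2 : ℂ) • P + ((1/2 : ℂ) • vecMulVec x (star x) - (1/4 : ℂ) • P)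
        = (1/4 : ℂ) • P + (1/2 : ℂ) • vecMulVec x (star x) by module]
    exact (hP.posSemidef.smul (by positivity)).add
      ((posSemidef_vecMulVec_self_star x).smul (by positivity))
  · rw [show (1/2 : ℂ) • P - ((1/2 : ℂ) • vecMulVec x (star x) - (1/4 : ℂ) • P)
        = (1/4 : ℂ) • P + (1/2 : ℂ) • (P - vecMulVec x (star x)) by module]
    exact (hP.posSemidef.smul (by positivity)).add
      ((posSemidef_sub_vecMulVec hP hx hPx).smul (by positivity))

theorem exists_smul_dotProduct_smul_eq_one {x : n → ℂ} (hx : x ≠ 0) :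
    ∃ c : ℂ, star (c • x) ⬝ᵥ (c • x) = 1 := by
  obtain ⟨hre, him⟩ := Complex.pos_iff.mp (dotProduct_star_self_pos_iff.mpr hx)
  set r := (star x ⬝ᵥ x).re
  have hr : (r : ℂ) = star x ⬝ᵥ x := Complex.ext rfl (by simpa using him)
  refine ⟨((√r)⁻¹ : ℝ), ?_⟩
  rw [star_smul, smul_dotProduct, dotProduct_smul, ← hr]
  simp only [Complex.star_def, Complex.conj_ofReal, smul_eq_mul, ← Complex.ofReal_mul]
  rw [← mul_assoc, ← mul_inv, Real.mul_self_sqrt hre.le, inv_mul_cancel₀ hre.ne',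
    Complex.ofReal_one]

theorem exists_unit_mulVec_eq_self {M : Matrix n n ℂ} (hM : IsIdempotentElem M) (h0 : M ≠ 0) :
    ∃ f : n → ℂ, star f ⬝ᵥ f = 1 ∧ M *ᵥ f = f := by
  classical
  obtain ⟨j, hj⟩ : ∃ j, M *ᵥ Pi.single j 1 ≠ 0 := by
    by_contra! h
    exact h0 (ext_of_mulVec_single fun j => by rw [h j, zero_mulVec])
  obtain ⟨c, hc⟩ := exists_smul_dotProduct_smul_eq_one hj
  refine ⟨c • M *ᵥ Pi.single j 1, hc, ?_⟩
  rw [mulVec_smul, mulVec_mulVec, hM.eq]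

theorem vecMulVec_mulVec_star_mulVec {ι : Type*} (A : Matrix ι n ℂ) (x y : n → ℂ) :
    vecMulVec (A *ᵥ x) (star (A *ᵥ y)) = A * vecMulVec x (star y) * Aᴴ := by
  rw [star_mulVec, ← mul_vecMulVec, ← vecMulVec_mul, Matrix.mul_assoc]

theorem IsHermitian.dotProduct_eq_zero_of_mulVec {M : Matrix n n ℂ} (hM : M.IsHermitian)
    {f g : n → ℂ} (hf : M *ᵥ f = f) (hg : M *ᵥ g = 0) : star f ⬝ᵥ g = 0 := by
  rw [← hf, star_mulVec, ← dotProduct_mulVec, hM.eq, hg, dotProduct_zero]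

open scoped MatrixOrder in
theorem PosSemidef.mul_eq_zero_of_conjTranspose_mul_add_mul_eq_zero {m : Type*} [Fintype m]
    {X Y : Matrix n n ℂ} (hX : X.PosSemidef) (hY : Y.PosSemidef) {B : Matrix n m ℂ}
    (h : Bᴴ * (X + Y) * B = 0) : X * B = 0 := by
  classical
  have hXB : Bᴴ * X * B = 0 := by
    rw [Matrix.mul_add, Matrix.add_mul] at h
    exact ((add_eq_zero_iff_of_nonneg (nonneg_iff_posSemidef.mpr (hX.conjTranspose_mul_mul_same B))
      (nonneg_iff_posSemidef.mpr (hY.conjTranspose_mul_mul_same B))).mp h).1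
  refine ext_of_mulVec_single fun j => ?_
  rw [zero_mulVec, ← mulVec_mulVec, ← hX.dotProduct_mulVec_zero_iff, star_mulVec,
    ← dotProduct_mulVec, mulVec_mulVec, mulVec_mulVec, hXB, zero_mulVec, dotProduct_zero]

end

section

variable {n : Type*} [Fintype n] [DecidableEq n]

theorem isStarProjection_one_kronecker {m : Type*} [Fintype m] {E : Matrix m m ℂ}
    (hE : IsStarProjection E) :
    IsStarProjection ((1 : Matrix n n ℂ) ⊗ₖ E) where
  isIdempotentElem := by
    rw [IsIdempotentElem, ← mul_kronecker_mul, Matrix.one_mul, hE.isIdempotentElem.eq]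
  isSelfAdjoint := by
    rw [IsSelfAdjoint, star_eq_conjTranspose, conjTranspose_kronecker, conjTranspose_one,
      show Eᴴ = E from hE.isSelfAdjoint]

theorem PosSemidef.mul_eq_self_of_smul_add_smul_eq_smul {X Y Q : Matrix n n ℂ}
    (hX : X.PosSemidef) (hY : Y.PosSemidef) (hQ : IsStarProjection Q) {a b : ℝ} (ha : 0 < a)
    (hb : 0 < b) {c : ℂ} (h : a • X + b • Y = c • Q) : Q * X = X ∧ X * Q = X := by
  have hcorner : (a • X) * (1 - Q) = 0 := by
    refine (hX.smul ha.le).mul_eq_zero_of_conjTranspose_mul_add_mul_eq_zero (hY.smul hb.le) ?_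
    rw [h, show (1 - Q)ᴴ = 1 - Q from hQ.one_sub.isSelfAdjoint, Matrix.mul_smul,
      hQ.one_sub_mul_self, smul_zero, Matrix.zero_mul]
  have hXQ : X * Q = X := by
    rw [smul_mul_assoc, smul_eq_zero_iff_right ha.ne', Matrix.mul_sub, Matrix.mul_one,
      sub_eq_zero] at hcorner
    exact hcorner.symm
  refine ⟨?_, hXQ⟩
  simpa [hX.isHermitian.eq, show Qᴴ = Q from hQ.isSelfAdjoint] using congr($(hXQ)ᴴ)

theorem sum_vecMulVec_star_eq_one {b : n → n → ℂ}
    (hb : ∀ i j, star (b i) ⬝ᵥ b j = (1 : Matrix n n ℂ) i j) :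
    ∑ i, vecMulVec (b i) (star (b i)) = 1 := by
  set U : Matrix n n ℂ := (of b)ᵀ
  have hU : Uᴴ * U = 1 := by
    ext i j
    simpa [U, mul_apply, dotProduct] using hb i j
  have hU' : U * Uᴴ = 1 := mul_eq_one_comm.mp hU
  ext r s
  simpa [U, mul_apply, vecMulVec_apply, Matrix.sum_apply] using congr($hU' r s)

theorem vecMulVec_add_vecMulVec_eq_one {f f' : Fin 2 → ℂ} (hf : star f ⬝ᵥ f = 1)
    (hf' : star f' ⬝ᵥ f' = 1) (hff' : star f ⬝ᵥ f' = 0) :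
    vecMulVec f (star f) + vecMulVec f' (star f') = 1 := by
  have hf'f : star f' ⬝ᵥ f = 0 := by
    rw [← star_star f, star_dotProduct_star, hff', star_zero]
  simpa [Fin.sum_univ_two] using sum_vecMulVec_star_eq_one (b := ![f, f'])
    (by simp only [Fin.forall_fin_two]; exact ⟨⟨hf, hff'⟩, hf'f, hf'⟩)

theorem IsHermitian.star_eigenvectorBasis_dotProduct {A : Matrix n n ℂ} (hA : A.IsHermitian)
    (i j : n) :
    star ⇑(hA.eigenvectorBasis i) ⬝ᵥ ⇑(hA.eigenvectorBasis j) = (1 : Matrix n n ℂ) i j := by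
  rw [dotProduct_comm, ← EuclideanSpace.inner_eq_star_dotProduct,
    orthonormal_iff_ite.mp hA.eigenvectorBasis.orthonormal, one_apply]

theorem IsHermitian.eq_sum_eigenvalues_smul_vecMulVec {A : Matrix n n ℂ}
    (hA : A.IsHermitian) :
    A = ∑ i, (hA.eigenvalues i : ℂ) •
      vecMulVec (hA.eigenvectorBasis i) (star (hA.eigenvectorBasis i)) := by
  calc A = A * ∑ i, vecMulVec (hA.eigenvectorBasis i) (star (hA.eigenvectorBasis i)) := by
        rw [sum_vecMulVec_star_eq_one hA.star_eigenvectorBasis_dotProduct, Matrix.mul_one]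
    _ = _ := by
        simp only [Finset.mul_sum, mul_vecMulVec, hA.mulVec_eigenvectorBasis,
          RCLike.real_smul_eq_coe_smul (K := ℂ), smul_vecMulVec]
        rfl

theorem IsHermitian.exists_vecMulVec_eq_smul_add_smul_one {ρ : Matrix (Fin 2) (Fin 2) ℂ}
    (hρ : ρ.IsHermitian) (hns : ∀ c : ℂ, ρ ≠ c • 1) :
    ∃ e e' : Fin 2 → ℂ, star e ⬝ᵥ e = 1 ∧ star e' ⬝ᵥ e' = 1 ∧
      vecMulVec e (star e) + vecMulVec e' (star e') = 1 ∧
      ∃ a b : ℂ, vecMulVec e (star e) = a • ρ + b • 1 := by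
  set b := hρ.eigenvectorBasis
  set μ₀ : ℂ := (hρ.eigenvalues 0 : ℂ)
  set μ₁ : ℂ := (hρ.eigenvalues 1 : ℂ)
  set E₀ := vecMulVec ⇑(b 0) (star ⇑(b 0))
  set E₁ := vecMulVec ⇑(b 1) (star ⇑(b 1))
  have hcompl : E₀ + E₁ = 1 := by
    simpa [Fin.sum_univ_two] using sum_vecMulVec_star_eq_one hρ.star_eigenvectorBasis_dotProduct
  have hρE : ρ = μ₁ • 1 + (μ₀ - μ₁) • E₀ := by
    rw [hρ.eq_sum_eigenvalues_smul_vecMulVec, Fin.sum_univ_two, ← hcompl]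
    module
  have hne : μ₀ - μ₁ ≠ 0 := fun h => hns μ₁ (by rw [hρE, h, zero_smul, add_zero])
  refine ⟨b 0, b 1, hρ.star_eigenvectorBasis_dotProduct 0 0,
    hρ.star_eigenvectorBasis_dotProduct 1 1, hcompl, (μ₀ - μ₁)⁻¹, -(μ₀ - μ₁)⁻¹ * μ₁, ?_⟩
  rw [hρE, smul_add, smul_smul, smul_smul, inv_mul_cancel₀ hne, one_smul]
  module

end

section

variable {n m ι : Type*} [Fintype n] [Fintype ι] [DecidableEq n]

def tensorRight (u : m → ℂ) : Matrix (n × m) n ℂ :=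
  of fun p k => if p.1 = k then u p.2 else 0

theorem tensorRight_mulVec (u : m → ℂ) (f : n → ℂ) :
    tensorRight u *ᵥ f = fun p : n × m => f p.1 * u p.2 := by
  ext p
  simp [tensorRight, mulVec, dotProduct, mul_comm]

theorem conjTranspose_tensorRight_mul_self [Fintype m] {u : m → ℂ} (hu : star u ⬝ᵥ u = 1) :
    (tensorRight (n := n) u)ᴴ * tensorRight (n := n) u = 1 := by
  ext i k
  simp only [tensorRight, mul_apply, conjTranspose_apply, of_apply, Fintype.sum_prod_type]
  by_cases h : i = k
  · subst h
    simpa [dotProduct] using hu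
  · simp [h, Ne.symm h]

theorem tensorRight_mul_conjTranspose (u : m → ℂ) :
    tensorRight (n := n) u * (tensorRight (n := n) u)ᴴ = 1 ⊗ₖ vecMulVec u (star u) := by
  ext ⟨i, j⟩ ⟨k, l⟩
  rw [mul_apply]
  by_cases h : i = k <;> simp [tensorRight, vecMulVec_apply, h, eq_comm]

theorem star_mulVec_dotProduct_mulVec {V : Matrix ι n ℂ} (hV : Vᴴ * V = 1) (f g : n → ℂ) :
    star (V *ᵥ f) ⬝ᵥ (V *ᵥ g) = star f ⬝ᵥ g := by
  rw [star_mulVec, ← dotProduct_mulVec, mulVec_mulVec, hV, one_mulVec]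

theorem mul_eq_mul_compression {P : Matrix ι ι ℂ} {V : Matrix ι n ℂ} (hV : Vᴴ * V = 1)
    (hc : Commute P (V * Vᴴ)) : P * V = V * (Vᴴ * P * V) := by
  calc P * V = P * (V * Vᴴ) * V := by rw [Matrix.mul_assoc, Matrix.mul_assoc, hV, Matrix.mul_one]
    _ = V * (Vᴴ * P * V) := by rw [hc.eq]; simp only [Matrix.mul_assoc]

theorem _root_.IsStarProjection.compression {P : Matrix ι ι ℂ} (hP : IsStarProjection P)
    {V : Matrix ι n ℂ} (hV : Vᴴ * V = 1) (hc : Commute P (V * Vᴴ)) :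
    IsStarProjection (Vᴴ * P * V) where
  isIdempotentElem := by
    rw [IsIdempotentElem, Matrix.mul_assoc _ V, ← mul_eq_mul_compression hV hc, Matrix.mul_assoc,
      ← Matrix.mul_assoc P, hP.isIdempotentElem.eq, Matrix.mul_assoc]
  isSelfAdjoint := isHermitian_conjTranspose_mul_mul V hP.isSelfAdjoint

theorem eq_add_of_commute_of_mul_conjTranspose_add [DecidableEq ι] {P : Matrix ι ι ℂ}
    {V V' : Matrix ι n ℂ} (hV : Vᴴ * V = 1) (hV' : V'ᴴ * V' = 1) (hcompl : V * Vᴴ + V' * V'ᴴ = 1)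
    (hc : Commute P (V * Vᴴ)) (hc' : Commute P (V' * V'ᴴ)) :
    P = V * (Vᴴ * P * V) * Vᴴ + V' * (V'ᴴ * P * V') * V'ᴴ := by
  calc P = P * V * Vᴴ + P * V' * V'ᴴ := by
        rw [Matrix.mul_assoc, Matrix.mul_assoc, ← Matrix.mul_add, hcompl, Matrix.mul_one]
    _ = _ := by rw [mul_eq_mul_compression hV hc, mul_eq_mul_compression hV' hc']

theorem exists_orthonormal_of_compression_ne [DecidableEq ι] {P : Matrix ι ι ℂ}
    (hP : IsStarProjection P) {V : Matrix ι n ℂ} (hV : Vᴴ * V = 1) (hc : Commute P (V * Vᴴ))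
    (h0 : Vᴴ * P * V ≠ 0) (h1 : Vᴴ * P * V ≠ 1) :
    ∃ f f' : n → ℂ, star f ⬝ᵥ f = 1 ∧ star f' ⬝ᵥ f' = 1 ∧ star f ⬝ᵥ f' = 0 ∧
      V *ᵥ f ∈ LinearMap.range P.mulVecLin ∧ V *ᵥ f' ∈ LinearMap.range (1 - P).mulVecLin := by
  have hM := hP.compression hV hc
  obtain ⟨f, hf, hMf⟩ := exists_unit_mulVec_eq_self hM.isIdempotentElem h0
  obtain ⟨f', hf', hMf'⟩ :=
    exists_unit_mulVec_eq_self hM.one_sub.isIdempotentElem (sub_ne_zero.mpr h1.symm)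
  have hMf'0 : (Vᴴ * P * V) *ᵥ f' = 0 := by
    rwa [sub_mulVec, one_mulVec, sub_eq_self] at hMf'
  refine ⟨f, f', hf, hf', IsHermitian.dotProduct_eq_zero_of_mulVec hM.isSelfAdjoint hMf hMf'0,
    ⟨V *ᵥ f, ?_⟩, ⟨V *ᵥ f', ?_⟩⟩
  · rw [mulVecLin_apply, mulVec_mulVec, mul_eq_mul_compression hV hc, ← mulVec_mulVec, hMf]
  · rw [mulVecLin_apply, sub_mulVec, one_mulVec, mulVec_mulVec, mul_eq_mul_compression hV hc,
      ← mulVec_mulVec, hMf'0, mulVec_zero, sub_zero]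

theorem exists_commute_one_kronecker_vecMulVec {P : Matrix (n × Fin 2) (n × Fin 2) ℂ}
    {ρ : Matrix (Fin 2) (Fin 2) ℂ} (hρ : ρ.IsHermitian) (hns : ∀ c : ℂ, ρ ≠ c • 1)
    (hc : Commute P (1 ⊗ₖ ρ)) :
    ∃ e e' : Fin 2 → ℂ, star e ⬝ᵥ e = 1 ∧ star e' ⬝ᵥ e' = 1 ∧
      vecMulVec e (star e) + vecMulVec e' (star e') = 1 ∧
      Commute P (1 ⊗ₖ vecMulVec e (star e)) ∧ Commute P (1 ⊗ₖ vecMulVec e' (star e')) := by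
  obtain ⟨e, e', he, he', hcompl, a, b, hab⟩ := hρ.exists_vecMulVec_eq_smul_add_smul_one hns
  have hcE : Commute P (1 ⊗ₖ vecMulVec e (star e)) := by
    rw [hab, kronecker_add, kronecker_smul, kronecker_smul, one_kronecker_one]
    exact (hc.smul_right a).add_right ((Commute.one_right P).smul_right b)
  refine ⟨e, e', he, he', hcompl, hcE, ?_⟩
  rw [eq_sub_of_add_eq' hcompl, kronecker_sub, one_kronecker_one]
  exact (Commute.one_right P).sub_right hcE

theorem eq_one_kronecker_or_exists_product_mem_range_of_commute
    {P : Matrix (n × Fin 2) (n × Fin 2) ℂ} (hP : IsStarProjection P) (hP0 : P ≠ 0) (hP1 : P ≠ 1)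
    {e e' : Fin 2 → ℂ} (he : star e ⬝ᵥ e = 1) (he' : star e' ⬝ᵥ e' = 1)
    (hcompl : vecMulVec e (star e) + vecMulVec e' (star e') = 1)
    (hc : Commute P (1 ⊗ₖ vecMulVec e (star e))) (hc' : Commute P (1 ⊗ₖ vecMulVec e' (star e'))) :
    (∃ v : Fin 2 → ℂ, star v ⬝ᵥ v = 1 ∧ P = 1 ⊗ₖ vecMulVec v (star v)) ∨
      ∃ (e : Fin 2 → ℂ) (f f' : n → ℂ), star e ⬝ᵥ e = 1 ∧ star f ⬝ᵥ f = 1 ∧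
        star f' ⬝ᵥ f' = 1 ∧ star f ⬝ᵥ f' = 0 ∧
        (fun p : n × Fin 2 => f p.1 * e p.2) ∈ LinearMap.range P.mulVecLin ∧
        (fun p : n × Fin 2 => f' p.1 * e p.2) ∈ LinearMap.range (1 - P).mulVecLin := by
  set V : Matrix (n × Fin 2) n ℂ := tensorRight e
  set V' : Matrix (n × Fin 2) n ℂ := tensorRight e'
  have hV : Vᴴ * V = 1 := conjTranspose_tensorRight_mul_self he
  have hV' : V'ᴴ * V' = 1 := conjTranspose_tensorRight_mul_self he'
  have hQ : V * Vᴴ = 1 ⊗ₖ vecMulVec e (star e) := tensorRight_mul_conjTranspose e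
  have hQ' : V' * V'ᴴ = 1 ⊗ₖ vecMulVec e' (star e') := tensorRight_mul_conjTranspose e'
  have hQQ' : V * Vᴴ + V' * V'ᴴ = 1 := by
    rw [hQ, hQ', ← kronecker_add, hcompl, one_kronecker_one]
  rw [← hQ] at hc
  rw [← hQ'] at hc'
  by_cases hM : Vᴴ * P * V ≠ 0 ∧ Vᴴ * P * V ≠ 1
  · obtain ⟨f, f', hf, hf', hff', hx, hx'⟩ :=
      exists_orthonormal_of_compression_ne hP hV hc hM.1 hM.2
    rw [tensorRight_mulVec] at hx hx'
    exact Or.inr ⟨e, f, f', he, hf, hf', hff', hx, hx'⟩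
  by_cases hM' : V'ᴴ * P * V' ≠ 0 ∧ V'ᴴ * P * V' ≠ 1
  · obtain ⟨f, f', hf, hf', hff', hx, hx'⟩ :=
      exists_orthonormal_of_compression_ne hP hV' hc' hM'.1 hM'.2
    rw [tensorRight_mulVec] at hx hx'
    exact Or.inr ⟨e', f, f', he', hf, hf', hff', hx, hx'⟩
  have hPdec := eq_add_of_commute_of_mul_conjTranspose_add hV hV' hQQ' hc hc'
  rw [not_and_or, not_not, not_not] at hM hM'
  rcases hM with hM | hM <;> rcases hM' with hM' | hM' <;> rw [hM, hM'] at hPdec <;>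
    simp only [Matrix.mul_zero, Matrix.zero_mul, Matrix.mul_one, add_zero, zero_add] at hPdec
  · exact absurd hPdec hP0
  · exact Or.inl ⟨e', he', hPdec.trans hQ'⟩
  · exact Or.inl ⟨e, he, hPdec.trans hQ⟩
  · exact absurd (hPdec.trans hQQ') hP1

end

end Matrix

theorem isTester_two_iff {d₂ d₁ : ℕ} {T : Fin 2 → Matrix (Fin d₂ × Fin d₁) (Fin d₂ × Fin d₁) ℂ} :
    IsTester d₂ d₁ 2 T ↔ (T 0).PosSemidef ∧ (T 1).PosSemidef ∧
      ∃ ρ : Matrix (Fin d₁) (Fin d₁) ℂ, ρ.PosSemidef ∧ ρ.trace = 1 ∧ T 0 + T 1 = 1 ⊗ₖ ρ := by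
  simp [IsTester, Fin.forall_fin_two, Fin.sum_univ_two, and_assoc]

noncomputable def halfTester {d₂ : ℕ} (P : Matrix (Fin d₂ × Fin 2) (Fin d₂ × Fin 2) ℂ) :
    Fin 2 → Matrix (Fin d₂ × Fin 2) (Fin d₂ × Fin 2) ℂ :=
  ![(1/2 : ℂ) • P, (1/2 : ℂ) • (1 - P)]

section

variable {d₂ : ℕ}

theorem isTester_halfTester {P : Matrix (Fin d₂ × Fin 2) (Fin d₂ × Fin 2) ℂ}
    (hP : IsStarProjection P) : IsTester d₂ 2 2 (halfTester P) := by
  refine isTester_two_iff.mpr ⟨hP.posSemidef.smul (by positivity),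
    hP.one_sub.posSemidef.smul (by positivity), (1/2 : ℂ) • 1, PosSemidef.one.smul (by positivity),
    by simp [trace_smul], ?_⟩
  simp [halfTester, kronecker_smul, ← smul_add]

theorem halfTester_not_mem_extremePoints_of_perturbation
    {P D₀ D₁ : Matrix (Fin d₂ × Fin 2) (Fin d₂ × Fin 2) ℂ} {v : Fin 2 → ℂ}
    (hv : star v ⬝ᵥ v = 1) (hD₀ : D₀ ≠ 0)
    (h₀add : ((1/2 : ℂ) • P + D₀).PosSemidef) (h₀sub : ((1/2 : ℂ) • P - D₀).PosSemidef)
    (h₁add : ((1/2 : ℂ) • (1 - P) + D₁).PosSemidef)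
    (h₁sub : ((1/2 : ℂ) • (1 - P) - D₁).PosSemidef)
    (hD : D₀ + D₁ = (1/2 : ℂ) • (1 ⊗ₖ vecMulVec v (star v)) - (1/4 : ℂ) • 1) :
    halfTester P ∉ {W | IsTester d₂ 2 2 W}.extremePoints ℝ := by
  set E := vecMulVec v (star v)
  have hE : IsStarProjection E := isStarProjection_vecMulVec hv
  have htr : E.trace = 1 := by rw [trace_vecMulVec, dotProduct_comm, hv]
  refine not_mem_extremePoints_of_add_mem_of_sub_mem (d := ![D₀, D₁])
    (fun h => hD₀ (congrFun h 0)) ?_ ?_ <;> refine isTester_two_iff.mpr ⟨?_, ?_, ?_⟩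
  · simpa [halfTester] using h₀add
  · simpa [halfTester] using h₁add
  · refine ⟨(1/4 : ℂ) • 1 + (1/2 : ℂ) • E,
      (PosSemidef.one.smul (by positivity)).add (hE.posSemidef.smul (by positivity)), ?_, ?_⟩
    · norm_num [trace_smul, htr]
    · simp only [halfTester, Pi.add_apply, cons_val_zero, cons_val_one]
      rw [add_add_add_comm, hD, kronecker_add, kronecker_smul, kronecker_smul, one_kronecker_one]
      module
  · simpa [halfTester] using h₀sub
  · simpa [halfTester] using h₁sub
  · refine ⟨(1/4 : ℂ) • 1 + (1/2 : ℂ) • (1 - E),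
      (PosSemidef.one.smul (by positivity)).add (hE.one_sub.posSemidef.smul (by positivity)),
      ?_, ?_⟩
    · norm_num [trace_smul, trace_sub, htr]
    · simp only [halfTester, Pi.sub_apply, cons_val_zero, cons_val_one]
      rw [sub_add_sub_comm, hD, kronecker_add, kronecker_smul, kronecker_smul, kronecker_sub,
        one_kronecker_one]
      module

theorem halfTester_not_mem_extremePoints_of_eq_one_kronecker [NeZero d₂]
    {P : Matrix (Fin d₂ × Fin 2) (Fin d₂ × Fin 2) ℂ} {v : Fin 2 → ℂ} (hv : star v ⬝ᵥ v = 1)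
    (hP : P = 1 ⊗ₖ vecMulVec v (star v)) :
    halfTester P ∉ {W | IsTester d₂ 2 2 W}.extremePoints ℝ := by
  have hPproj : IsStarProjection P :=
    hP ▸ isStarProjection_one_kronecker (isStarProjection_vecMulVec hv)
  have hP0 : P ≠ 0 := by
    intro h
    have := congrArg trace (hP.symm.trans h)
    simp only [trace_kronecker, trace_one, Fintype.card_fin, trace_vecMulVec, dotProduct_comm v, hv,
      mul_one, trace_zero, Nat.cast_eq_zero] at this
    exact NeZero.ne d₂ this
  refine halfTester_not_mem_extremePoints_of_perturbation (D₀ := (1/4 : ℂ) • P)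
    (D₁ := -((1/4 : ℂ) • (1 - P))) hv (smul_ne_zero (by norm_num) hP0) ?_ ?_ ?_ ?_ ?_
  · rw [show (1/2 : ℂ) • P + (1/4 : ℂ) • P = (3/4 : ℂ) • P by module]
    exact hPproj.posSemidef.smul (by positivity)
  · rw [show (1/2 : ℂ) • P - (1/4 : ℂ) • P = (1/4 : ℂ) • P by module]
    exact hPproj.posSemidef.smul (by positivity)
  · rw [show (1/2 : ℂ) • (1 - P) + -((1/4 : ℂ) • (1 - P)) = (1/4 : ℂ) • (1 - P) by module]
    exact hPproj.one_sub.posSemidef.smul (by positivity)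
  · rw [show (1/2 : ℂ) • (1 - P) - -((1/4 : ℂ) • (1 - P)) = (3/4 : ℂ) • (1 - P) by module]
    exact hPproj.one_sub.posSemidef.smul (by positivity)
  · rw [← hP]
    module

theorem halfTester_not_mem_extremePoints_of_product_mem_range
    {P : Matrix (Fin 2 × Fin 2) (Fin 2 × Fin 2) ℂ} (hP : IsStarProjection P)
    {e f f' : Fin 2 → ℂ} (he : star e ⬝ᵥ e = 1) (hf : star f ⬝ᵥ f = 1)
    (hf' : star f' ⬝ᵥ f' = 1) (hff' : star f ⬝ᵥ f' = 0)
    (hx : (fun p : Fin 2 × Fin 2 => f p.1 * e p.2) ∈ LinearMap.range P.mulVecLin)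
    (hx' : (fun p : Fin 2 × Fin 2 => f' p.1 * e p.2) ∈ LinearMap.range (1 - P).mulVecLin) :
    halfTester P ∉ {W | IsTester 2 2 2 W}.extremePoints ℝ := by
  set V : Matrix (Fin 2 × Fin 2) (Fin 2) ℂ := tensorRight e
  have hV : Vᴴ * V = 1 := conjTranspose_tensorRight_mul_self he
  rw [← tensorRight_mulVec e f] at hx
  rw [← tensorRight_mulVec e f'] at hx'
  set x := V *ᵥ f
  set x' := V *ᵥ f'
  have hxx : star x ⬝ᵥ x = 1 := (star_mulVec_dotProduct_mulVec hV f f).trans hf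
  have hxx' : star x' ⬝ᵥ x' = 1 := (star_mulVec_dotProduct_mulVec hV f' f').trans hf'
  have hPx : P *ᵥ x = x := mulVec_eq_self_of_mem_range hP.isIdempotentElem hx
  have hPx' : (1 - P) *ᵥ x' = x' := mulVec_eq_self_of_mem_range hP.one_sub.isIdempotentElem hx'
  have hRR' : vecMulVec x (star x) + vecMulVec x' (star x') = 1 ⊗ₖ vecMulVec e (star e) := by
    rw [vecMulVec_mulVec_star_mulVec, vecMulVec_mulVec_star_mulVec, ← Matrix.add_mul,
      ← Matrix.mul_add, vecMulVec_add_vecMulVec_eq_one hf hf' hff', Matrix.mul_one,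
      tensorRight_mul_conjTranspose]
  obtain ⟨h₀add, h₀sub⟩ := posSemidef_half_smul_add_and_sub hP hxx hPx
  obtain ⟨h₁add, h₁sub⟩ := posSemidef_half_smul_add_and_sub hP.one_sub hxx' hPx'
  refine halfTester_not_mem_extremePoints_of_perturbation he ?_ h₀add h₀sub h₁add h₁sub ?_
  · intro h
    have hx0 : x = (4 : ℂ) • (((1/2 : ℂ) • vecMulVec x (star x) - (1/4 : ℂ) • P) *ᵥ x) := by
      rw [sub_mulVec, smul_mulVec, smul_mulVec, vecMulVec_mulVec, hxx, hPx]
      simp only [MulOpposite.op_one, one_smul]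
      module
    rw [h, zero_mulVec, smul_zero] at hx0
    simp [hx0] at hxx
  · rw [← hRR']
    module

theorem exists_commute_of_halfTester_not_mem_extremePoints
    {P : Matrix (Fin d₂ × Fin 2) (Fin d₂ × Fin 2) ℂ} (hP : IsStarProjection P)
    (hT : halfTester P ∉ {W | IsTester d₂ 2 2 W}.extremePoints ℝ) :
    ∃ ρ : Matrix (Fin 2) (Fin 2) ℂ, ρ.IsHermitian ∧ (∀ c : ℂ, ρ ≠ c • 1) ∧ Commute P (1 ⊗ₖ ρ) := by
  rw [mem_extremePoints_iff_left] at hT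
  push Not at hT
  obtain ⟨T', hT', T'', hT'', ⟨a, b, ha, hb, -, hsum⟩, hne⟩ := hT (isTester_halfTester hP)
  obtain ⟨h0, h1, ρ, hρ, htr, hρsum⟩ := isTester_two_iff.mp hT'
  obtain ⟨h0', h1', -⟩ := isTester_two_iff.mp hT''
  obtain ⟨hPT0, hT0P⟩ := h0.mul_eq_self_of_smul_add_smul_eq_smul h0' hP ha hb
    (by simpa [halfTester] using congrFun hsum 0)
  obtain ⟨hPT1, hT1P⟩ := h1.mul_eq_self_of_smul_add_smul_eq_smul h1' hP.one_sub ha hb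
    (by simpa [halfTester] using congrFun hsum 1)
  have hPT1' : P * T' 1 = 0 := by
    rw [← hPT1, ← Matrix.mul_assoc, hP.mul_one_sub_self, Matrix.zero_mul]
  have hT1P' : T' 1 * P = 0 := by
    rw [← hT1P, Matrix.mul_assoc, hP.one_sub_mul_self, Matrix.mul_zero]
  have hPρ : P * (1 ⊗ₖ ρ) = T' 0 := by rw [← hρsum, Matrix.mul_add, hPT0, hPT1', add_zero]
  refine ⟨ρ, hρ.isHermitian, fun c hc => hne ?_, ?_⟩
  · have hc2 : c = 1/2 := by
      rw [hc, trace_smul, trace_one] at htr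
      simp only [Fintype.card_fin, Nat.cast_ofNat, smul_eq_mul] at htr
      linear_combination htr / 2
    have hhalf : (1 : Matrix (Fin d₂) (Fin d₂) ℂ) ⊗ₖ ρ = (1/2 : ℂ) • 1 := by
      rw [hc, hc2, kronecker_smul, one_kronecker_one]
    have hT0 : T' 0 = (1/2 : ℂ) • P := by rw [← hPρ, hhalf, Matrix.mul_smul, Matrix.mul_one]
    have hT1 : T' 1 = (1/2 : ℂ) • (1 - P) := by
      rw [eq_sub_of_add_eq' hρsum, hhalf, hT0, smul_sub]
    exact funext_iff.mpr (Fin.forall_fin_two.mpr ⟨hT0, hT1⟩)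
  · show P * (1 ⊗ₖ ρ) = (1 ⊗ₖ ρ) * P
    rw [hPρ, ← hρsum, Matrix.add_mul, hT0P, hT1P', add_zero]

end

theorem stmt_12_general (P₁ P₂ : Matrix (Fin 2 × Fin 2) (Fin 2 × Fin 2) ℂ)
    (h₁herm : P₁.IsHermitian) (h₁proj : P₁ * P₁ = P₁) (h₁rank : P₁.rank = 2)
    (h₂rank : P₂.rank = 2)
    (hsum : P₁ + P₂ = 1) :
    ![(1/2 : ℂ) • P₁, (1/2 : ℂ) • P₂] ∉ {W | IsTester 2 2 2 W}.extremePoints ℝ ↔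
      ((∃ v : Fin 2 → ℂ, (∑ j, star (v j) * v j = 1) ∧
          P₁ = (1 : Matrix (Fin 2) (Fin 2) ℂ) ⊗ₖ Matrix.vecMulVec v (star v)) ∨
        (∃ e f f' : Fin 2 → ℂ,
          (∑ j, star (e j) * e j = 1) ∧ (∑ j, star (f j) * f j = 1) ∧
          (∑ j, star (f' j) * f' j = 1) ∧ (∑ j, star (f j) * f' j = 0) ∧
          (fun p : Fin 2 × Fin 2 => f p.1 * e p.2) ∈ LinearMap.range P₁.mulVecLin ∧
          (fun p : Fin 2 × Fin 2 => f' p.1 * e p.2) ∈ LinearMap.range P₂.mulVecLin)) := by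
  obtain rfl : P₂ = 1 - P₁ := eq_sub_of_add_eq' hsum
  have hP : IsStarProjection P₁ := ⟨h₁proj, h₁herm⟩
  have hP0 : P₁ ≠ 0 := by
    rintro rfl
    simp at h₁rank
  have hP1 : P₁ ≠ 1 := by
    rintro rfl
    simp at h₂rank
  constructor
  · intro hT
    obtain ⟨ρ, hρ, hns, hc⟩ := exists_commute_of_halfTester_not_mem_extremePoints hP hT
    obtain ⟨e, e', he, he', hcompl, hcE, hcE'⟩ := exists_commute_one_kronecker_vecMulVec hρ hns hc
    exact eq_one_kronecker_or_exists_product_mem_range_of_commute hP hP0 hP1 he he' hcompl hcE hcE'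
  · rintro (⟨v, hv, hPv⟩ | ⟨e, f, f', he, hf, hf', hff', hx, hx'⟩)
    · exact halfTester_not_mem_extremePoints_of_eq_one_kronecker hv hPv
    · exact halfTester_not_mem_extremePoints_of_product_mem_range hP he hf hf' hff' hx hx'

theorem stmt_12 (P₁ P₂ : Matrix (Fin 2 × Fin 2) (Fin 2 × Fin 2) ℂ)
    (h₁herm : P₁.IsHermitian) (h₁proj : P₁ * P₁ = P₁) (h₁rank : P₁.rank = 2)
    (h₂herm : P₂.IsHermitian) (h₂proj : P₂ * P₂ = P₂) (h₂rank : P₂.rank = 2)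
    (hsum : P₁ + P₂ = 1) :
    ![(1/2 : ℂ) • P₁, (1/2 : ℂ) • P₂] ∉ {W | IsTester 2 2 2 W}.extremePoints ℝ ↔
      ((∃ v : Fin 2 → ℂ, (∑ j, star (v j) * v j = 1) ∧
          P₁ = (1 : Matrix (Fin 2) (Fin 2) ℂ) ⊗ₖ Matrix.vecMulVec v (star v)) ∨
        (∃ e f f' : Fin 2 → ℂ,
          (∑ j, star (e j) * e j = 1) ∧ (∑ j, star (f j) * f j = 1) ∧
          (∑ j, star (f' j) * f' j = 1) ∧ (∑ j, star (f j) * f' j = 0) ∧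
          (fun p : Fin 2 × Fin 2 => f p.1 * e p.2) ∈ LinearMap.range P₁.mulVecLin ∧
          (fun p : Fin 2 × Fin 2 => f' p.1 * e p.2) ∈ LinearMap.range P₂.mulVecLin)) :=
  stmt_12_general P₁ P₂ h₁herm h₁proj h₁rank h₂rank hsum
end
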